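/- Let f : ℝⁿ → ℝ be C^p with p ≥ 2 and satisfy the PL inequality around a local minimum x̄ with value f* and solution set S. Then S is a C^{p-1} embedded submanifold of ℝⁿ in a neighborhood of x̄, of codimension equal to rank ∇²f(x̄). -/

import Mathlib

open Metric Filter Topology InnerProductSpace Finset Function
open scoped NNReal

/-!
Near `xb`, one gradient step `y ↦ y - L⁻¹ ∇f y` (with `L` a Lipschitz constant of `∇f`) moves by
at most the decrease of the potential `√(8 (f - f xb) / μ)`: this is the descent lemma combined
with the PL inequality. Hence the iterates started at `x` have finite length and converge to a
critical point `z` with `‖x - z‖ ≤ 2/μ ‖∇f x‖`, a local error bound.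

Let `H = ∇²f(xb)` and let `φ` be the coordinates of the orthogonal projection of `∇f` onto
`range H`. Then `Dφ(xb)` is onto, hence so is `Dφ` near `xb`. If `φ x = 0`, then `∇f x ⊥ range H`,
and as `∇f x - ∇f z = H (x - z) + o(‖x - z‖)`, the error bound gives
`‖∇f x‖² = ⟪∇f x - ∇f z, ∇f x⟫ ≤ ½ ‖∇f x‖²`. So `x` is critical, and by PL it is a minimizer
at level `f xb`.
-/

-- A form of Caristi's fixed point theorem, proved by iterating `T`.
theorem Function.exists_isFixedPt_of_dist_le_sub {α : Type*} [MetricSpace α] [CompleteSpace α]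
    {T : α → α} {V : α → ℝ} {x₀ : α} (hV : ∀ y, 0 ≤ V y)
    (hT : ContinuousOn T (closedBall x₀ (V x₀)))
    (hstep : ∀ y ∈ closedBall x₀ (V x₀), dist y (T y) ≤ V y - V (T y)) :
    ∃ z ∈ closedBall x₀ (V x₀), IsFixedPt T z := by
  set x : ℕ → α := fun k => T^[k] x₀
  have hsucc : ∀ k, x (k + 1) = T (x k) := fun k => iterate_succ_apply' T k x₀
  have hdist : ∀ k, dist x₀ (x k) ≤ ∑ i ∈ range k, dist (x i) (x (i + 1)) :=
    dist_le_range_sum_dist x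
  have hmem_of_le : ∀ k, ∑ i ∈ range k, dist (x i) (x (i + 1)) + V (x k) ≤ V x₀ →
      x k ∈ closedBall x₀ (V x₀) := fun k hk => by
    rw [mem_closedBall, dist_comm]
    linarith [hdist k, hV (x k)]
  have hbound : ∀ k, ∑ i ∈ range k, dist (x i) (x (i + 1)) + V (x k) ≤ V x₀ := by
    intro k
    induction k with
    | zero => simp [x]
    | succ k ih =>
      rw [sum_range_succ, hsucc]
      linarith [hstep _ (hmem_of_le k ih)]
  have hmem : ∀ k, x k ∈ closedBall x₀ (V x₀) := fun k => hmem_of_le k (hbound k)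
  obtain ⟨z, hz⟩ := cauchySeq_tendsto_of_complete <| cauchySeq_of_dist_le_of_summable _
    (fun k => le_rfl) <| summable_of_sum_range_le (fun _ => dist_nonneg)
      fun k => by linarith [hbound k, hV (x k)]
  have hzmem := isClosed_closedBall.mem_of_tendsto hz (Eventually.of_forall hmem)
  refine ⟨z, hzmem, tendsto_nhds_unique ?_ ((tendsto_add_atTop_iff_nat 1).2 hz)⟩
  simpa only [hsucc, comp_def] using
    (hT z hzmem).tendsto.comp (tendsto_nhdsWithin_iff.2 ⟨hz, Eventually.of_forall hmem⟩)

theorem ApproximatesLinearOn.norm_le_of_mem_orthogonal_range {E F : Type*}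
    [NormedAddCommGroup E] [NormedSpace ℝ E] [NormedAddCommGroup F] [InnerProductSpace ℝ F]
    {g : E → F} {A : E →L[ℝ] F} {s : Set E} {c : ℝ≥0} (hg : ApproximatesLinearOn g A s c)
    {x z : E} (hx : x ∈ s) (hz : z ∈ s) (hgz : g z = 0)
    (hgx : g x ∈ (LinearMap.range (A : E →ₗ[ℝ] F))ᗮ) :
    ‖g x‖ ≤ c * ‖x - z‖ := by
  have horth : ⟪A (x - z), g x⟫_ℝ = 0 :=
    Submodule.inner_right_of_mem_orthogonal (LinearMap.mem_range_self _ _) hgx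
  have : ‖g x‖ ^ 2 ≤ c * ‖x - z‖ * ‖g x‖ :=
    calc ‖g x‖ ^ 2 = ⟪g x - g z - A (x - z), g x⟫_ℝ := by
          rw [hgz, sub_zero, inner_sub_left, horth, sub_zero, real_inner_self_eq_norm_sq]
      _ ≤ ‖g x - g z - A (x - z)‖ * ‖g x‖ := real_inner_le_norm _ _
      _ ≤ c * ‖x - z‖ * ‖g x‖ := by gcongr; exact hg x hx z hz
  rcases (norm_nonneg (g x)).eq_or_lt with h0 | hpos
  · rw [← h0]; positivity
  · exact le_of_mul_le_mul_right (by rwa [← sq]) hpos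

theorem ContinuousAt.eventually_surjective {𝕜 X E F : Type*} [NontriviallyNormedField 𝕜]
    [CompleteSpace 𝕜] [TopologicalSpace X] [NormedAddCommGroup E] [NormedSpace 𝕜 E]
    [NormedAddCommGroup F] [NormedSpace 𝕜 F] [FiniteDimensional 𝕜 F]
    {A : X → E →L[𝕜] F} {x : X} (hA : ContinuousAt A x) (hx : Surjective (A x)) :
    ∀ᶠ y in 𝓝 x, Surjective (A y) := by
  have := FiniteDimensional.complete 𝕜 F
  obtain ⟨g, hg⟩ := (A x).exists_rightInverse_of_surjective (LinearMap.range_eq_top.2 hx)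
  have hc : ContinuousAt (fun y => (A y).comp g) x :=
    ((ContinuousLinearMap.compL 𝕜 F E F).flip g).continuous.continuousAt.comp hA
  filter_upwards [hc.eventually_mem (Units.isOpen.mem_nhds (by rw [hg]; exact isUnit_one))]
    with y hy
  obtain ⟨b, hb⟩ := IsUnit.exists_right_inv hy
  exact fun w => ⟨g (b w), congrArg (fun M : F →L[𝕜] F => M w) hb⟩

section RangeCoord

variable {E F : Type*} [NormedAddCommGroup E] [NormedSpace ℝ E] [NormedAddCommGroup F]
  [InnerProductSpace ℝ F] [FiniteDimensional ℝ F]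

noncomputable def rangeCoord (A : E →L[ℝ] F) :
    F →L[ℝ]
      EuclideanSpace ℝ (Fin (Module.finrank ℝ (LinearMap.range (A : E →ₗ[ℝ] F)))) :=
  ((stdOrthonormalBasis ℝ (LinearMap.range (A : E →ₗ[ℝ] F))).repr.toContinuousLinearEquiv :
      _ →L[ℝ] _) ∘L
    (LinearMap.range (A : E →ₗ[ℝ] F)).orthogonalProjectionOnto

theorem rangeCoord_comp_surjective (A : E →L[ℝ] F) : Surjective (rangeCoord A ∘L A) := by
  intro w
  set b := stdOrthonormalBasis ℝ (LinearMap.range (A : E →ₗ[ℝ] F))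
  obtain ⟨u, hu⟩ := LinearMap.mem_range.1 (b.repr.symm w).2
  have hproj :
      (LinearMap.range (A : E →ₗ[ℝ] F)).orthogonalProjectionOnto (A u) = b.repr.symm w := by
    rw [show A u = _ from hu, Submodule.orthogonalProjectionOnto_mem_subspace_eq_self]
  refine ⟨u, ?_⟩
  simp [rangeCoord, hproj, b]

theorem rangeCoord_eq_zero_iff {A : E →L[ℝ] F} {v : F} :
    rangeCoord A v = 0 ↔ v ∈ (LinearMap.range (A : E →ₗ[ℝ] F))ᗮ := by
  simp [rangeCoord, Submodule.orthogonalProjectionOnto_eq_zero_iff]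

end RangeCoord

theorem div_le_sqrt_sub_sqrt_of_descent {h h' G L μ : ℝ} (hL : 0 < L) (hμ : 0 < μ)
    (hG : 0 ≤ G) (hh' : 0 ≤ h') (hdesc : h' ≤ h - G ^ 2 / (2 * L))
    (hPL : h ≤ 1 / (2 * μ) * G ^ 2) :
    G / L ≤ √(8 * h / μ) - √(8 * h' / μ) := by
  have hGL : 0 ≤ G ^ 2 / (2 * L) := by positivity
  have hh : 0 ≤ h := by linarith
  set a := √(8 * h / μ)
  set b := √(8 * h' / μ)
  have ha : a ^ 2 = 8 * h / μ := Real.sq_sqrt (by positivity)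
  have hb : b ^ 2 = 8 * h' / μ := Real.sq_sqrt (by positivity)
  have hba : b ≤ a := Real.sqrt_le_sqrt (by gcongr; linarith)
  have hGa : μ * a ≤ 2 * G := by
    have : (μ * a) ^ 2 ≤ (2 * G) ^ 2 := by
      rw [mul_pow, ha]
      calc μ ^ 2 * (8 * h / μ) = 8 * μ * h := by field_simp
        _ ≤ 8 * μ * (1 / (2 * μ) * G ^ 2) := by gcongr
        _ = (2 * G) ^ 2 := by field_simp; ring
    exact (pow_le_pow_iff_left₀ (by positivity) (by positivity) two_ne_zero).1 this
  have hab : 4 * G ^ 2 ≤ μ * L * (a ^ 2 - b ^ 2) := by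
    rw [ha, hb]
    calc 4 * G ^ 2 = 8 * L * (G ^ 2 / (2 * L)) := by field_simp; ring
      _ ≤ 8 * L * (h - h') := by gcongr; linarith
      _ = μ * L * (8 * h / μ - 8 * h' / μ) := by field_simp
  have hsq : G ^ 2 ≤ G * (L * (a - b)) := by
    have hab0 : 0 ≤ a - b := sub_nonneg.2 hba
    have : μ * L * (a ^ 2 - b ^ 2) ≤ 4 * (G * (L * (a - b))) :=
      calc μ * L * (a ^ 2 - b ^ 2) = μ * L * (a - b) * (a + b) := by ring
        _ ≤ μ * L * (a - b) * (2 * a) := by gcongr; linarith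
        _ = 2 * L * (a - b) * (μ * a) := by ring
        _ ≤ 2 * L * (a - b) * (2 * G) := by gcongr
        _ = 4 * (G * (L * (a - b))) := by ring
    linarith
  rw [div_le_iff₀ hL, mul_comm (a - b)]
  rcases hG.eq_or_lt with rfl | hGpos
  · nlinarith
  · nlinarith

section Gradient

variable {E : Type*} [NormedAddCommGroup E] [InnerProductSpace ℝ E] [CompleteSpace E]
  {f : E → ℝ}

theorem IsLocalMin.gradient_eq_zero {a : E} (h : IsLocalMin f a) : gradient f a = 0 := by
  simp [gradient, h.fderiv_eq_zero]

theorem ContDiff.gradient {n : WithTop ℕ∞} (hf : ContDiff ℝ (n + 1) f) :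
    ContDiff ℝ n (gradient f) :=
  (toDual ℝ E).symm.contDiff.comp (hf.fderiv_right le_rfl)

theorem le_add_inner_gradient_add_sq_of_lipschitzOnWith (hf : Differentiable ℝ f) {s : Set E}
    (hs : Convex ℝ s) {L : ℝ≥0} (hL : LipschitzOnWith L (gradient f) s) {x y : E}
    (hx : x ∈ s) (hy : y ∈ s) :
    f y ≤ f x + ⟪gradient f x, y - x⟫_ℝ + L / 2 * ‖y - x‖ ^ 2 := by
  set v := y - x
  have hline : ∀ t ∈ Set.Icc (0 : ℝ) 1, x + t • v ∈ s := fun t ht => by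
    simpa [v, add_sub_cancel] using hs.add_smul_sub_mem hx hy ht
  have hderiv : ∀ t,
      HasDerivAt (fun t : ℝ => f (x + t • v)) ⟪gradient f (x + t • v), v⟫_ℝ t := by
    intro t
    rw [inner_gradient_left]
    exact (hf _).hasFDerivAt.comp_hasDerivAt t
      (by simpa using ((hasDerivAt_id t).smul_const v).const_add x)
  have hparabola : ∀ t, HasDerivAt
      (fun t : ℝ => f x + t * ⟪gradient f x, v⟫_ℝ + t ^ 2 * (L / 2 * ‖v‖ ^ 2))
      (⟪gradient f x, v⟫_ℝ + t * (L * ‖v‖ ^ 2)) t := by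
    intro t
    refine ((((hasDerivAt_id t).mul_const _).const_add (f x)).add
      ((hasDerivAt_pow 2 t).mul_const (L / 2 * ‖v‖ ^ 2))).congr_deriv ?_
    simp only [Nat.cast_ofNat]
    ring
  have hslope : ∀ t ∈ Set.Ico (0 : ℝ) 1, ⟪gradient f (x + t • v), v⟫_ℝ ≤
      ⟪gradient f x, v⟫_ℝ + t * (L * ‖v‖ ^ 2) := by
    intro t ht
    have hinner := real_inner_le_norm (gradient f (x + t • v) - gradient f x) v
    have hlip : ‖gradient f (x + t • v) - gradient f x‖ ≤ L * (t * ‖v‖) := by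
      simpa [norm_smul, abs_of_nonneg ht.1] using
        hL.norm_sub_le (hline t (Set.Ico_subset_Icc_self ht)) hx
    rw [inner_sub_left] at hinner
    nlinarith [mul_le_mul_of_nonneg_right hlip (norm_nonneg v)]
  have hle := image_le_of_deriv_right_le_deriv_boundary (a := 0) (b := 1)
    (fun t _ => (hderiv t).continuousAt.continuousWithinAt)
    (fun t _ => (hderiv t).hasDerivWithinAt) (by simp)
    (fun t _ => (hparabola t).continuousAt.continuousWithinAt)
    (fun t _ => (hparabola t).hasDerivWithinAt) hslope (Set.right_mem_Icc.2 zero_le_one)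
  simpa [v] using hle

theorem apply_sub_inv_smul_gradient_le (hf : Differentiable ℝ f) {s : Set E} (hs : Convex ℝ s)
    {L : ℝ≥0} (hL : LipschitzOnWith L (gradient f) s) (hL₀ : 0 < L) {x : E} (hx : x ∈ s)
    (hx' : x - (L : ℝ)⁻¹ • gradient f x ∈ s) :
    f (x - (L : ℝ)⁻¹ • gradient f x) ≤ f x - ‖gradient f x‖ ^ 2 / (2 * L) := by
  have h := le_add_inner_gradient_add_sq_of_lipschitzOnWith hf hs hL hx hx'
  rw [sub_sub_cancel_left, inner_neg_right, real_inner_smul_right, real_inner_self_eq_norm_sq,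
    norm_neg, norm_smul, Real.norm_of_nonneg (by positivity)] at h
  have hL₀' : (0 : ℝ) < L := hL₀
  refine h.trans_eq ?_
  field_simp
  ring

theorem dist_sub_inv_smul_gradient_le_sub_sqrt (hf : Differentiable ℝ f) {xb : E} {ρ μ : ℝ}
    {L : ℝ≥0} (hL₀ : 0 < L) (hμ : 0 < μ) (hcrit : gradient f xb = 0)
    (hL : LipschitzOnWith L (gradient f) (closedBall xb ρ))
    (hmin : ∀ y ∈ closedBall xb ρ, f xb ≤ f y)
    (hPL : ∀ y ∈ closedBall xb ρ, f y - f xb ≤ 1 / (2 * μ) * ‖gradient f y‖ ^ 2)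
    {y : E} (hy : y ∈ closedBall xb (ρ / 2)) :
    dist y (y - (L : ℝ)⁻¹ • gradient f y) ≤
      √(8 * (f y - f xb) / μ) -
        √(8 * (f (y - (L : ℝ)⁻¹ • gradient f y) - f xb) / μ) := by
  set y' := y - (L : ℝ)⁻¹ • gradient f y
  have hL₀' : (0 : ℝ) < L := hL₀
  have hyxb := mem_closedBall.1 hy
  have hρ : 0 ≤ ρ := by linarith [dist_nonneg (x := y) (y := xb)]
  have hyρ : y ∈ closedBall xb ρ := closedBall_subset_closedBall (by linarith) hy
  have hstep : dist y y' = ‖gradient f y‖ / L := by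
    rw [dist_eq_norm, sub_sub_cancel, norm_smul, Real.norm_of_nonneg (by positivity)]
    field_simp
  have hy'ρ : y' ∈ closedBall xb ρ := by
    have hgrad : ‖gradient f y‖ ≤ L * dist y xb := by
      simpa [hcrit, dist_eq_norm] using hL.norm_sub_le hyρ (mem_closedBall_self hρ)
    have : ‖gradient f y‖ / L ≤ dist y xb := by rwa [div_le_iff₀ hL₀', mul_comm]
    rw [mem_closedBall]
    linarith [dist_triangle_left y' xb y]
  rw [hstep]
  exact div_le_sqrt_sub_sqrt_of_descent hL₀' hμ (norm_nonneg _) (sub_nonneg.2 (hmin _ hy'ρ))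
    (by linarith [apply_sub_inv_smul_gradient_le hf (convex_closedBall xb ρ) hL hL₀ hyρ hy'ρ])
    (hPL y hyρ)

theorem IsLocalMin.eventually_exists_gradient_eq_zero_dist_le (hf : Differentiable ℝ f) {xb : E}
    (hmin : IsLocalMin f xb) {μ : ℝ} (hμ : 0 < μ)
    (hPL : ∀ᶠ x in 𝓝 xb, f x - f xb ≤ 1 / (2 * μ) * ‖gradient f x‖ ^ 2)
    {K : ℝ≥0} {s : Set E} (hs : s ∈ 𝓝 xb) (hK : LipschitzOnWith K (gradient f) s)
    {t : Set E} (ht : t ∈ 𝓝 xb) :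
    ∀ᶠ x in 𝓝 xb, ∃ z ∈ t, gradient f z = 0 ∧
      dist x z ≤ 2 / μ * ‖gradient f x‖ := by
  obtain ⟨ρ, hρ, hball⟩ :=
    nhds_basis_closedBall.mem_iff.1 (inter_mem (inter_mem hmin hPL) (inter_mem hs ht))
  set L : ℝ≥0 := K + 1
  have hL : LipschitzOnWith L (gradient f) (closedBall xb ρ) :=
    (hK.mono fun y hy => (hball hy).2.1).weaken (le_add_of_nonneg_right zero_le_one)
  set V : E → ℝ := fun y => √(8 * (f y - f xb) / μ)
  have hV : Tendsto (fun x => dist x xb + V x) (𝓝 xb) (𝓝 0) := by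
    have hc : Continuous fun x => dist x xb + V x := by
      have := hf.continuous
      fun_prop
    simpa [V] using hc.tendsto xb
  filter_upwards [hV.eventually (gt_mem_nhds (half_pos hρ)), hPL] with x hx hPLx
  have hsub : closedBall x (V x) ⊆ closedBall xb (ρ / 2) :=
    closedBall_subset_closedBall' (by linarith)
  have hsubρ : closedBall xb (ρ / 2) ⊆ closedBall xb ρ :=
    closedBall_subset_closedBall (by linarith)
  obtain ⟨z, hz, hfix⟩ := Function.exists_isFixedPt_of_dist_le_sub
    (T := fun y => y - (L : ℝ)⁻¹ • gradient f y) (V := V) (fun y => Real.sqrt_nonneg _)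
    (continuousOn_id.sub ((hL.continuousOn.mono (hsub.trans hsubρ)).const_smul _))
    (fun y hy => dist_sub_inv_smul_gradient_le_sub_sqrt hf (by positivity) hμ
      hmin.gradient_eq_zero hL (fun y hy => (hball hy).1.1) (fun y hy => (hball hy).1.2)
      (hsub hy))
  refine ⟨z, (hball (hsubρ (hsub hz))).2.2, ?_, (mem_closedBall'.1 hz).trans ?_⟩
  · have : (L : ℝ)⁻¹ • gradient f z = 0 := sub_eq_self.1 hfix
    exact (smul_eq_zero.1 this).resolve_left (by positivity)
  · calc V x ≤ √((2 / μ * ‖gradient f x‖) ^ 2) := by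
          apply Real.sqrt_le_sqrt
          calc 8 * (f x - f xb) / μ ≤ 8 * (1 / (2 * μ) * ‖gradient f x‖ ^ 2) / μ := by
                gcongr
            _ = _ := by field_simp; ring
      _ = 2 / μ * ‖gradient f x‖ := Real.sqrt_sq (by positivity)

theorem IsLocalMin.eventually_isLocalMin_of_gradient_eq_zero {xb : E} (hmin : IsLocalMin f xb)
    {μ : ℝ} (hPL : ∀ᶠ x in 𝓝 xb, f x - f xb ≤ 1 / (2 * μ) * ‖gradient f x‖ ^ 2) :
    ∀ᶠ x in 𝓝 xb, gradient f x = 0 → IsLocalMin f x ∧ f x = f xb := by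
  filter_upwards [hmin.eventually_nhds, hPL] with x hx hPLx hcrit
  have hfx : f x = f xb := le_antisymm (by simpa [hcrit] using hPLx) hx.self_of_nhds
  exact ⟨hx.mono fun y hy => hfx ▸ hy, hfx⟩

theorem IsLocalMin.eventually_gradient_eq_zero_of_mem_orthogonal {xb : E}
    (hf : Differentiable ℝ f) (hmin : IsLocalMin f xb) {μ : ℝ} (hμ : 0 < μ)
    (hPL : ∀ᶠ x in 𝓝 xb, f x - f xb ≤ 1 / (2 * μ) * ‖gradient f x‖ ^ 2)
    {H : E →L[ℝ] E} (hH : HasStrictFDerivAt (gradient f) H xb) :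
    ∀ᶠ x in 𝓝 xb,
      gradient f x ∈ (LinearMap.range (H : E →ₗ[ℝ] E))ᗮ → gradient f x = 0 := by
  obtain ⟨K, s, hs, hK⟩ := hH.exists_lipschitzOnWith
  obtain ⟨t, ht, happrox⟩ :=
    hH.approximates_deriv_on_nhds (c := (μ / 4).toNNReal) (Or.inr (by positivity))
  filter_upwards [hmin.eventually_exists_gradient_eq_zero_dist_le hf hμ hPL hs hK ht,
    ht] with x ⟨z, hzt, hz, hdist⟩ hxt hx
  have h := happrox.norm_le_of_mem_orthogonal_range hxt hzt hz hx
  rw [Real.coe_toNNReal _ (by positivity), ← dist_eq_norm] at h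
  have : ‖gradient f x‖ ≤ ‖gradient f x‖ / 2 :=
    calc ‖gradient f x‖ ≤ μ / 4 * (2 / μ * ‖gradient f x‖) := h.trans (by gcongr)
      _ = ‖gradient f x‖ / 2 := by field_simp; ring
  exact norm_le_zero_iff.1 (by linarith)

end Gradient

/-- Under the PL inequality, the solution set `S` of a `C^p` function (`p ≥ 2`) is a
`C^{p-1}` embedded submanifold near `xb`, of codimension equal to the rank of the Hessian
at `xb` (expressed via a local defining function with surjective differential). -/
theorem pl_implies_submanifold {n : ℕ} (p : ℕ) (hp : 2 ≤ p)
    (f : EuclideanSpace ℝ (Fin n) → ℝ) (xb : EuclideanSpace ℝ (Fin n))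
    (hf : ContDiff ℝ p f) (hmin : IsLocalMin f xb)
    (μ : ℝ) (hμ : 0 < μ)
    (S : Set (EuclideanSpace ℝ (Fin n)))
    (hS : S = {y | IsLocalMin f y ∧ f y = f xb})
    (hPL : ∀ᶠ x in 𝓝 xb, f x - f xb ≤ (1 / (2 * μ)) * ‖gradient f x‖ ^ 2) :
    ∃ (U : Set (EuclideanSpace ℝ (Fin n)))
      (φ : EuclideanSpace ℝ (Fin n) →
        EuclideanSpace ℝ (Fin (Module.finrank ℝ (LinearMap.range (fderiv ℝ (gradient f) xb :
          EuclideanSpace ℝ (Fin n) →ₗ[ℝ] EuclideanSpace ℝ (Fin n)))))),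
      IsOpen U ∧ xb ∈ U ∧ ContDiffOn ℝ (p - 1 : ℕ) φ U ∧
      (∀ x ∈ U, Function.Surjective (fderiv ℝ φ x)) ∧
      S ∩ U = {x ∈ U | φ x = 0} := by
  have hg : ContDiff ℝ (p - 1 : ℕ) (gradient f) :=
    ContDiff.gradient (hf.of_le (by exact_mod_cast (by omega : p - 1 + 1 ≤ p)))
  have hg₁ : ((p - 1 : ℕ) : WithTop ℕ∞) ≠ 0 := by norm_cast; omega
  set H := fderiv ℝ (gradient f) xb
  have hsurj : ∀ᶠ x in 𝓝 xb, Surjective (rangeCoord H ∘L fderiv ℝ (gradient f) x) :=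
    ((ContinuousLinearMap.compL ℝ _ _ _ (rangeCoord H)).continuous.comp
      (hg.continuous_fderiv hg₁)).continuousAt.eventually_surjective
      (rangeCoord_comp_surjective H)
  have hcrit := hmin.eventually_gradient_eq_zero_of_mem_orthogonal
    (hf.differentiable (by norm_cast; omega)) hμ hPL (hg.contDiffAt.hasStrictFDerivAt hg₁)
  obtain ⟨U, hU, hUo, hxbU⟩ := _root_.eventually_nhds_iff.1
    (hsurj.and (hcrit.and (hmin.eventually_isLocalMin_of_gradient_eq_zero hPL)))
  refine ⟨U, fun x => rangeCoord H (gradient f x), hUo, hxbU,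
    ((rangeCoord H).contDiff.comp hg).contDiffOn, fun x hx => ?_, ?_⟩
  · rw [fderiv_fun_comp x (rangeCoord H).differentiableAt (hg.differentiable hg₁ x),
      ContinuousLinearMap.fderiv]
    exact (hU x hx).1
  · subst hS
    ext x
    constructor
    · rintro ⟨⟨hloc, -⟩, hxU⟩
      exact ⟨hxU, show rangeCoord H (gradient f x) = 0 by rw [hloc.gradient_eq_zero, map_zero]⟩
    · rintro ⟨hxU, hx⟩
      exact ⟨(hU x hxU).2.2 ((hU x hxU).2.1 (rangeCoord_eq_zero_iff.1 hx)), hxU⟩
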